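/- Let X be a connected graph and g an isometry of X. Suppose there exists a bi-infinite geodesic γ in X on which g acts as a translation of length ℓ ≥ 1, i.e. g·γ(n) = γ(n+ℓ) for all n ∈ ℤ. Then d(x, g·x) ≥ ℓ for every vertex x of X. Moreover, if a vertex x satisfies d(x, g·x) = ℓ, then d(x, gⁿ·x) = n·ℓ for all n ≥ 0, and consequently x lies on a bi-infinite geodesic on which g acts as a translation of length ℓ. -/

import Mathlib

open Filter Topology

namespace QM

variable {V : Type*}

/-- A quasi-median graph: connected, no induced `K₄⁻`, no induced `K_{3,2}`, and
satisfying the triangle and quadrangle conditions. -/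
structure IsQuasiMedian (G : SimpleGraph V) : Prop where
  connected : G.Connected
  no_K4minus : ∀ a b c d : V, a ≠ d → G.Adj a b → G.Adj a c → G.Adj b c →
    G.Adj b d → G.Adj c d → G.Adj a d
  no_K32 : ∀ x₁ x₂ x₃ y₁ y₂ : V, x₁ ≠ x₂ → x₁ ≠ x₃ → x₂ ≠ x₃ → y₁ ≠ y₂ →
    G.Adj x₁ y₁ → G.Adj x₁ y₂ → G.Adj x₂ y₁ → G.Adj x₂ y₂ → G.Adj x₃ y₁ → G.Adj x₃ y₂ →
    G.Adj x₁ x₂ ∨ G.Adj x₁ x₃ ∨ G.Adj x₂ x₃ ∨ G.Adj y₁ y₂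
  triangle : ∀ a x y : V, G.Adj x y → G.dist a x = G.dist a y →
    ∃ z, G.Adj x z ∧ G.Adj y z ∧ G.dist a z + 1 = G.dist a x
  quadrangle : ∀ a x y z : V, x ≠ y → G.Adj x z → G.Adj y z →
    G.dist a x = G.dist a y → G.dist a x + 1 = G.dist a z →
    ∃ w, G.Adj x w ∧ G.Adj y w ∧ G.dist a w + 2 = G.dist a z

/-- Two edges are elementarily related if they belong to a common triangle or are
opposite sides of a 4-cycle. -/
def EdgeRel (G : SimpleGraph V) (e f : Sym2 V) : Prop :=
  (∃ a b c : V, G.Adj a b ∧ G.Adj b c ∧ G.Adj a c ∧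
    (e = s(a, b) ∨ e = s(b, c) ∨ e = s(a, c)) ∧ (f = s(a, b) ∨ f = s(b, c) ∨ f = s(a, c))) ∨
  (∃ a b c d : V, G.Adj a b ∧ G.Adj b c ∧ G.Adj c d ∧ G.Adj d a ∧
    e = s(a, b) ∧ f = s(c, d))

/-- The hyperplane (equivalence class) of an edge. -/
def hyperplaneOf (G : SimpleGraph V) (e : Sym2 V) : Set (Sym2 V) :=
  {f | f ∈ G.edgeSet ∧ Relation.ReflTransGen (EdgeRel G) e f}

/-- A hyperplane is an equivalence class of edges. -/
def IsHyperplane (G : SimpleGraph V) (J : Set (Sym2 V)) : Prop :=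
  ∃ e ∈ G.edgeSet, J = hyperplaneOf G e

/-- A sector delimited by the set of edges `J`: a connected component of the graph
obtained by deleting the edges of `J`. -/
def IsSector (G : SimpleGraph V) (J : Set (Sym2 V)) (S : Set V) : Prop :=
  ∃ x : V, S = {y | (G.deleteEdges J).Reachable x y}

/-- `J` separates the vertices `x` and `y`: they lie in distinct sectors. -/
def SepVerts (G : SimpleGraph V) (J : Set (Sym2 V)) (x y : V) : Prop :=
  ¬ (G.deleteEdges J).Reachable x y

/-- `J` separates the sets `A` and `B`: each lies in a single sector, and these
sectors differ. -/
def SepSets (G : SimpleGraph V) (J : Set (Sym2 V)) (A B : Set V) : Prop :=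
  (∀ a ∈ A, ∀ a' ∈ A, (G.deleteEdges J).Reachable a a') ∧
  (∀ b ∈ B, ∀ b' ∈ B, (G.deleteEdges J).Reachable b b') ∧
  (∀ a ∈ A, ∀ b ∈ B, ¬ (G.deleteEdges J).Reachable a b)

/-- The carrier of a set of edges: all endpoints of its edges. -/
def carrier (J : Set (Sym2 V)) : Set V := {v | ∃ e ∈ J, v ∈ e}

/-- Two sets of edges are transverse if they contain two edges spanning a 4-cycle. -/
def Transverse (G : SimpleGraph V) (J₁ J₂ : Set (Sym2 V)) : Prop :=
  ∃ a b c d : V, G.Adj a b ∧ G.Adj b c ∧ G.Adj c d ∧ G.Adj d a ∧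
    ((s(a, b) ∈ J₁ ∧ s(b, c) ∈ J₂) ∨ (s(a, b) ∈ J₂ ∧ s(b, c) ∈ J₁))

/-- Two sets of edges are in contact if their carriers share a vertex. -/
def InContact (J₁ J₂ : Set (Sym2 V)) : Prop := (carrier J₁ ∩ carrier J₂).Nonempty

/-- The type of hyperplanes of `G`. -/
def Hyperplanes (G : SimpleGraph V) := {J : Set (Sym2 V) // IsHyperplane G J}

/-- The crossing graph: vertices are hyperplanes, adjacent when transverse. -/
def crossingGraph (G : SimpleGraph V) : SimpleGraph (Hyperplanes G) where
  Adj J K := J ≠ K ∧ Transverse G J.1 K.1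
  symm := ⟨by
    rintro J K ⟨hne, a, b, c, d, h1, h2, h3, h4, h5⟩
    exact ⟨hne.symm, a, b, c, d, h1, h2, h3, h4, h5.symm⟩⟩
  loopless := ⟨fun J h => h.1 rfl⟩

/-- The contact graph: vertices are hyperplanes, adjacent when in contact. -/
def contactGraph (G : SimpleGraph V) : SimpleGraph (Hyperplanes G) where
  Adj J K := J ≠ K ∧ InContact J.1 K.1
  symm := ⟨by
    rintro J K ⟨hne, x, hx1, hx2⟩
    exact ⟨hne.symm, x, hx2, hx1⟩⟩
  loopless := ⟨fun J h => h.1 rfl⟩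

/-- A permutation of the vertices is an automorphism (equivalently, for a connected
graph, an isometry) if it preserves adjacency. -/
def IsAut (G : SimpleGraph V) (g : Equiv.Perm V) : Prop :=
  ∀ x y : V, G.Adj (g x) (g y) ↔ G.Adj x y

lemma IsAut.symm {G : SimpleGraph V} {g : Equiv.Perm V} (hg : IsAut G g) : IsAut G g.symm := by
  intro x y
  conv_rhs => rw [← g.apply_symm_apply x, ← g.apply_symm_apply y]
  exact (hg _ _).symm

lemma edgeRel_map {G : SimpleGraph V} {g : Equiv.Perm V} (hg : IsAut G g)
    {e f : Sym2 V} (h : EdgeRel G e f) :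
    EdgeRel G (Sym2.map g e) (Sym2.map g f) := by
  rcases h with ⟨a, b, c, h1, h2, h3, he, hf⟩ | ⟨a, b, c, d, h1, h2, h3, h4, he, hf⟩
  · refine Or.inl ⟨g a, g b, g c, (hg a b).mpr h1, (hg b c).mpr h2, (hg a c).mpr h3, ?_, ?_⟩
    · rcases he with rfl | rfl | rfl <;> simp [Sym2.map_pair_eq]
    · rcases hf with rfl | rfl | rfl <;> simp [Sym2.map_pair_eq]
  · exact Or.inr ⟨g a, g b, g c, g d, (hg a b).mpr h1, (hg b c).mpr h2, (hg c d).mpr h3,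
      (hg d a).mpr h4, by simp [he, Sym2.map_pair_eq], by simp [hf, Sym2.map_pair_eq]⟩

lemma mem_edgeSet_map {G : SimpleGraph V} {g : Equiv.Perm V} (hg : IsAut G g)
    {e : Sym2 V} (he : e ∈ G.edgeSet) : Sym2.map g e ∈ G.edgeSet := by
  induction e using Sym2.ind with
  | _ x y =>
    rw [Sym2.map_pair_eq, SimpleGraph.mem_edgeSet] at *
    exact (hg x y).mpr he

lemma map_symm_map {g : Equiv.Perm V} (s : Sym2 V) :
    Sym2.map g (Sym2.map g.symm s) = s := by
  rw [Sym2.map_map]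
  simp

lemma isHyperplane_map {G : SimpleGraph V} {g : Equiv.Perm V} (hg : IsAut G g)
    {J : Set (Sym2 V)} (hJ : IsHyperplane G J) :
    IsHyperplane G (Sym2.map g '' J) := by
  obtain ⟨e, he, rfl⟩ := hJ
  refine ⟨Sym2.map g e, mem_edgeSet_map hg he, ?_⟩
  ext f
  constructor
  · rintro ⟨f', ⟨hf1, hf2⟩, rfl⟩
    exact ⟨mem_edgeSet_map hg hf1,
      Relation.ReflTransGen.lift (Sym2.map g) (fun a b h => edgeRel_map hg h) _ _ hf2⟩
  · rintro ⟨hf1, hf2⟩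
    refine ⟨Sym2.map g.symm f, ⟨mem_edgeSet_map hg.symm hf1, ?_⟩, map_symm_map f⟩
    have := Relation.ReflTransGen.lift (Sym2.map g.symm)
      (fun a b h => edgeRel_map hg.symm h) _ _ hf2
    have h2 : Sym2.map g.symm (Sym2.map g e) = e := by
      rw [Sym2.map_map]; simp
    rw [Function.onFun, h2] at this
    exact this

/-- The map induced on hyperplanes by an automorphism. -/
def hypMap (G : SimpleGraph V) {g : Equiv.Perm V} (hg : IsAut G g) :
    Hyperplanes G → Hyperplanes G :=
  fun J => ⟨Sym2.map g '' J.1, isHyperplane_map hg J.2⟩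

/-- A bi-infinite geodesic in a graph: an isometric embedding of `ℤ`. -/
def IsBiGeodesic {W : Type*} (H : SimpleGraph W) (γ : ℤ → W) : Prop :=
  ∀ m n : ℤ, H.dist (γ m) (γ n) = (m - n).natAbs

/-- An axis of a map `φ`: a bi-infinite geodesic on which `φ` acts as a translation
of positive length. -/
def IsAxisOf {W : Type*} (H : SimpleGraph W) (φ : W → W) (γ : ℤ → W) : Prop :=
  IsBiGeodesic H γ ∧ ∃ ℓ : ℕ, 1 ≤ ℓ ∧ ∀ n : ℤ, φ (γ n) = γ (n + ℓ)

/-- A set of vertices is convex if it contains every geodesic between two of its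
vertices. -/
def ConvexSet (G : SimpleGraph V) (S : Set V) : Prop :=
  ∀ x ∈ S, ∀ y ∈ S, ∀ p : G.Walk x y, p.length = G.dist x y → ∀ v ∈ p.support, v ∈ S

/-- The convex hull of a set of vertices. -/
def convexHullSet (G : SimpleGraph V) (S : Set V) : Set V :=
  ⋂₀ {T : Set V | ConvexSet G T ∧ S ⊆ T}

/-- `p` is a gate of `x` in `S`. -/
def IsGate (G : SimpleGraph V) (S : Set V) (x p : V) : Prop :=
  p ∈ S ∧ ∀ z ∈ S, G.dist x p + G.dist p z = G.dist x z

/-- A set of vertices is gated if every vertex admits a gate in it. -/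
def Gated (G : SimpleGraph V) (S : Set V) : Prop :=
  ∀ x : V, ∃ p : V, IsGate G S x p

/-- A maximal complete subgraph, viewed as a set of vertices. -/
def IsMaxClique (G : SimpleGraph V) (C : Set V) : Prop :=
  G.IsClique C ∧ ∀ D : Set V, G.IsClique D → C ⊆ D → C = D

/-- Every vertex belongs to at most `N` (maximal) cliques. -/
def CliqueBound (G : SimpleGraph V) (N : ℕ) : Prop :=
  ∀ v : V, {C : Set V | IsMaxClique G C ∧ v ∈ C}.Finite ∧
    {C : Set V | IsMaxClique G C ∧ v ∈ C}.ncard ≤ N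

/-- A cut-vertex: removing it disconnects the graph. -/
def IsCutVertex (G : SimpleGraph V) (v : V) : Prop :=
  ¬ (G.induce {u : V | u ≠ v}).Connected

/-- Hausdorff distance between two sets of vertices, valued in `ℕ∞`. -/
noncomputable def hausDist (G : SimpleGraph V) (A B : Set V) : ℕ∞ :=
  max (⨆ a ∈ A, ⨅ b ∈ B, (G.dist a b : ℕ∞)) (⨆ b ∈ B, ⨅ a ∈ A, (G.dist a b : ℕ∞))

/-- `QC(γ)`: the supremum of Hausdorff distances between bi-infinite geodesics
contained in the convex hull of `γ`. -/
noncomputable def qc (G : SimpleGraph V) (γ : ℤ → V) : ℕ∞ :=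
  ⨆ (α : ℤ → V) (_ : IsBiGeodesic G α ∧ Set.range α ⊆ convexHullSet G (Set.range γ))
    (β : ℤ → V) (_ : IsBiGeodesic G β ∧ Set.range β ⊆ convexHullSet G (Set.range γ)),
    hausDist G (Set.range α) (Set.range β)

/-- `J` crosses the bi-infinite geodesic `γ`: it separates two of its vertices. -/
def Crosses (G : SimpleGraph V) (J : Set (Sym2 V)) (γ : ℤ → V) : Prop :=
  ∃ m n : ℤ, SepVerts G J (γ m) (γ n)

/-- `HQC(γ)`: the maximal size of two transverse collections of hyperplanes
crossing `γ`. -/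
noncomputable def hqc (G : SimpleGraph V) (γ : ℤ → V) : ℕ∞ :=
  sSup {n : ℕ∞ | ∃ H₁ H₂ : Finset (Set (Sym2 V)), (H₁.card : ℕ∞) = n ∧ (H₂.card : ℕ∞) = n ∧
    (∀ J ∈ H₁, IsHyperplane G J ∧ Crosses G J γ) ∧
    (∀ J ∈ H₂, IsHyperplane G J ∧ Crosses G J γ) ∧
    (∀ J ∈ H₁, ∀ K ∈ H₂, Transverse G J K)}

/-- Two hyperplanes are strongly separated if no hyperplane is transverse to both. -/
def StronglySeparated (G : SimpleGraph V) (A B : Set (Sym2 V)) : Prop :=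
  ∀ J : Set (Sym2 V), IsHyperplane G J → ¬ (Transverse G J A ∧ Transverse G J B)

/-- `J` separates the hyperplanes `A` and `B`: their carriers lie in distinct sectors. -/
def SepHyps (G : SimpleGraph V) (J A B : Set (Sym2 V)) : Prop :=
  SepSets G J (carrier A) (carrier B)

/-- `ss(A,B)`: the maximal number of pairwise strongly separated hyperplanes
separating `A` and `B`. -/
noncomputable def ssNum (G : SimpleGraph V) (A B : Set (Sym2 V)) : ℕ∞ :=
  sSup {n : ℕ∞ | ∃ F : Finset (Set (Sym2 V)), (F.card : ℕ∞) = n ∧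
    (∀ J ∈ F, IsHyperplane G J ∧ SepHyps G J A B) ∧
    (∀ J ∈ F, ∀ K ∈ F, J ≠ K → StronglySeparated G J K)}

/-- `δ`-hyperbolicity of a graph: every side of a geodesic triangle lies in the
`δ`-neighbourhood of the two other sides. -/
def GraphHyperbolic {W : Type*} (H : SimpleGraph W) (δ : ℝ) : Prop :=
  ∀ (a b c : W) (p : H.Walk a b) (q : H.Walk b c) (r : H.Walk a c),
    p.length = H.dist a b → q.length = H.dist b c → r.length = H.dist a c →
    ∀ v ∈ p.support, ∃ w : W, (w ∈ q.support ∨ w ∈ r.support) ∧ (H.dist v w : ℝ) ≤ δ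

/-- An inversion: an isometry stabilising a hyperplane and permuting its sectors
non-trivially. -/
def IsInversion (G : SimpleGraph V) (h : Equiv.Perm V) : Prop :=
  ∃ J : Set (Sym2 V), IsHyperplane G J ∧ Sym2.map h '' J = J ∧
    ∃ S : Set V, IsSector G J S ∧ h '' S ≠ S

/-- The bi-infinite path obtained by concatenating the `⟨g⟩`-translates of the
path `p`. -/
noncomputable def concatTranslates {G : SimpleGraph V} (g : Equiv.Perm V) {x y : V}
    (p : G.Walk x y) (n : ℤ) : V :=
  (g ^ (n / (p.length : ℤ))) (p.getVert (n % (p.length : ℤ)).toNat)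

/-! The displacement `n ↦ d(x, gⁿx)` is subadditive, so `d(x, gx)` bounds `d(y, gⁿy) / n` for every
`y`, up to an error `2 d(x, y) / n`; on the axis `γ` this quotient is `ℓ`. The same bound for `gⁿ`,
which translates `γ` by `nℓ`, gives `d(x, gⁿx) = nℓ` once `d(x, gx) = ℓ`. The translates `gᵏp` of a
geodesic `p` from `x` to `gx` then concatenate to a `1`-Lipschitz path `ℤ → V` which is geodesic
between any two of the points `gᵏx`, and hence geodesic between any two of its points. -/

section Isometry

variable {G : SimpleGraph V} {g : Equiv.Perm V}

def autSubgroup (G : SimpleGraph V) : Subgroup (Equiv.Perm V) where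
  carrier := {g | IsAut G g}
  mul_mem' {_ h} hg hh x y := (hg (h x) (h y)).trans (hh x y)
  one_mem' _ _ := Iff.rfl
  inv_mem' hg := hg.symm

lemma IsAut.pow (hg : IsAut G g) (n : ℕ) : IsAut G (g ^ n) := (autSubgroup G).pow_mem hg n

lemma IsAut.zpow (hg : IsAut G g) (k : ℤ) : IsAut G (g ^ k) := (autSubgroup G).zpow_mem hg k

lemma IsAut.dist_le (hconn : G.Connected) (hg : IsAut G g) (x y : V) :
    G.dist (g x) (g y) ≤ G.dist x y := by
  obtain ⟨p, hp⟩ := hconn.exists_walk_length_eq_dist x y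
  calc G.dist (g x) (g y) ≤ (p.map ⟨g, (hg _ _).mpr⟩).length := SimpleGraph.dist_le _
    _ = G.dist x y := by rw [SimpleGraph.Walk.length_map, hp]

lemma IsAut.dist_eq (hconn : G.Connected) (hg : IsAut G g) (x y : V) :
    G.dist (g x) (g y) = G.dist x y :=
  le_antisymm (hg.dist_le hconn x y) (by simpa using hg.symm.dist_le hconn (g x) (g y))

lemma IsAut.dist_pow_apply_le (hconn : G.Connected) (hg : IsAut G g) (x : V) (n : ℕ) :
    G.dist x ((g ^ n) x) ≤ n * G.dist x (g x) := by
  induction n with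
  | zero => simp
  | succ n ih =>
    calc G.dist x ((g ^ (n + 1)) x)
        ≤ G.dist x ((g ^ n) x) + G.dist ((g ^ n) x) ((g ^ n) (g x)) := by
          rw [pow_succ, Equiv.Perm.mul_apply]; exact hconn.dist_triangle
      _ ≤ (n + 1) * G.dist x (g x) := by rw [(hg.pow n).dist_eq hconn]; linarith

lemma IsAut.le_dist_of_le_dist_pow (hconn : G.Connected) (hg : IsAut G g) {y : V} {t : ℕ}
    (hy : ∀ n : ℕ, n * t ≤ G.dist y ((g ^ n) y)) (x : V) : t ≤ G.dist x (g x) := by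
  by_contra! hlt
  have hbound (n : ℕ) : n * t ≤ 2 * G.dist y x + n * G.dist x (g x) :=
    calc n * t ≤ G.dist y ((g ^ n) y) := hy n
      _ ≤ G.dist y x + G.dist x ((g ^ n) x) + G.dist ((g ^ n) x) ((g ^ n) y) := by
        have := hconn.dist_triangle (u := y) (v := x) (w := (g ^ n) y)
        have := hconn.dist_triangle (u := x) (v := (g ^ n) x) (w := (g ^ n) y)
        omega
      _ ≤ 2 * G.dist y x + n * G.dist x (g x) := by
        rw [(hg.pow n).dist_eq hconn, SimpleGraph.dist_comm (u := x) (v := y)]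
        linarith [hg.dist_pow_apply_le hconn x n]
  nlinarith [hbound (2 * G.dist y x + 1)]

end Isometry

section Translation

variable {G : SimpleGraph V} {g : Equiv.Perm V} {γ : ℤ → V} {t : ℕ}

lemma apply_pow_of_translate (htr : ∀ m : ℤ, g (γ m) = γ (m + t)) (n : ℕ) (m : ℤ) :
    (g ^ n) (γ m) = γ (m + ↑(n * t)) := by
  induction n with
  | zero => simp
  | succ n ih => rw [pow_succ', Equiv.Perm.mul_apply, ih, htr]; push_cast; congr 1; ring

lemma IsBiGeodesic.le_dist_of_translate (hconn : G.Connected) (hγ : IsBiGeodesic G γ)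
    (hg : IsAut G g) (htr : ∀ m : ℤ, g (γ m) = γ (m + t)) (x : V) : t ≤ G.dist x (g x) :=
  hg.le_dist_of_le_dist_pow hconn (y := γ 0) (fun n => by
    rw [apply_pow_of_translate htr, hγ]; omega) x

end Translation

section Geodesic

variable {G : SimpleGraph V} {f : ℤ → V}

lemma dist_le_natAbs_of_dist_succ_le (hconn : G.Connected)
    (hf : ∀ n : ℤ, G.dist (f n) (f (n + 1)) ≤ 1) (m n : ℤ) :
    G.dist (f m) (f n) ≤ (m - n).natAbs := by
  wlog hmn : m ≤ n generalizing m n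
  · rw [SimpleGraph.dist_comm]; have := this n m (by omega); omega
  induction n, hmn using Int.leInduction with
  | base => simp
  | succ k hmk ih =>
    have := hconn.dist_triangle (u := f m) (v := f k) (w := f (k + 1))
    have := hf k
    omega

lemma dist_eq_natAbs_of_le_of_le (hconn : G.Connected)
    (hf : ∀ m n : ℤ, G.dist (f m) (f n) ≤ (m - n).natAbs) {a m n b : ℤ}
    (ham : a ≤ m) (hmn : m ≤ n) (hnb : n ≤ b) (hab : G.dist (f a) (f b) = (a - b).natAbs) :
    G.dist (f m) (f n) = (m - n).natAbs := by
  have := hconn.dist_triangle (u := f a) (v := f m) (w := f b)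
  have := hconn.dist_triangle (u := f m) (v := f n) (w := f b)
  have := hf a m
  have := hf n b
  have := hf m n
  omega

lemma isBiGeodesic_of_dist_succ_le (hconn : G.Connected)
    (hf : ∀ n : ℤ, G.dist (f n) (f (n + 1)) ≤ 1) {ℓ : ℕ} (hℓ : 0 < ℓ)
    (hscale : ∀ (j : ℤ) (d : ℕ), G.dist (f (j * ℓ)) (f ((j + d) * ℓ)) = d * ℓ) :
    IsBiGeodesic G f := by
  intro m n
  wlog hmn : m ≤ n generalizing m n
  · rw [SimpleGraph.dist_comm]; have := this n m (by omega); omega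
  have hℓ' : (0 : ℤ) < ℓ := by exact_mod_cast hℓ
  -- enclose `[m, n]` in an interval between multiples of `ℓ`, on which `f` is geodesic
  set d := (n / ℓ + 1 - m / ℓ).toNat
  have hd : n / ℓ + 1 ≤ m / ℓ + d := by omega
  refine dist_eq_natAbs_of_le_of_le hconn (dist_le_natAbs_of_dist_succ_le hconn hf)
    (a := m / ℓ * ℓ) (b := (m / ℓ + d) * ℓ) (Int.ediv_mul_le m hℓ'.ne') hmn ?_ ?_
  · have := Int.lt_ediv_add_one_mul_self n hℓ'
    nlinarith
  · rw [hscale]; zify; rw [abs_of_nonpos (by nlinarith)]; ring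

end Geodesic

lemma exists_eq_mul_add_of_pos {L : ℕ} (hL : 0 < L) (n : ℤ) :
    ∃ (q : ℤ) (r : ℕ), r < L ∧ n = q * L + r := by
  have hL' : (0 : ℤ) < L := by exact_mod_cast hL
  refine ⟨n / L, (n % L).toNat, by have := Int.emod_lt_of_pos n hL'; omega, ?_⟩
  rw [Int.toNat_of_nonneg (Int.emod_nonneg n hL'.ne'), mul_comm, Int.mul_ediv_add_emod]

section ConcatTranslates

variable {G : SimpleGraph V} {g : Equiv.Perm V} {x : V} (p : G.Walk x (g x))

lemma concatTranslates_mul_add (hp : 0 < p.length) (q : ℤ) {r : ℕ} (hr : r ≤ p.length) :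
    concatTranslates g p (q * p.length + r) = (g ^ q) (p.getVert r) := by
  have hlt (q : ℤ) {r : ℕ} (hr : r < p.length) :
      concatTranslates g p (q * p.length + r) = (g ^ q) (p.getVert r) := by
    obtain ⟨hq, hr⟩ := (Int.ediv_emod_unique (a := q * p.length + r) (b := p.length) (r := r)
      (q := q) (by omega)).mpr ⟨by ring, by omega, by omega⟩
    simp only [concatTranslates, hq, hr, Int.toNat_natCast]
  rcases hr.lt_or_eq with hr | rfl
  · exact hlt q hr
  · have := hlt (q + 1) hp
    rw [Nat.cast_zero, add_zero, add_mul, one_mul] at this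
    rw [this, SimpleGraph.Walk.getVert_zero, SimpleGraph.Walk.getVert_length, zpow_add_one,
      Equiv.Perm.mul_apply]

lemma concatTranslates_mul (hp : 0 < p.length) (q : ℤ) :
    concatTranslates g p (q * p.length) = (g ^ q) x := by
  simpa using concatTranslates_mul_add p hp q (Nat.zero_le _)

lemma apply_concatTranslates (hp : 0 < p.length) (n : ℤ) :
    g (concatTranslates g p n) = concatTranslates g p (n + p.length) := by
  obtain ⟨q, r, hr, rfl⟩ := exists_eq_mul_add_of_pos hp n
  rw [show q * p.length + r + p.length = (1 + q) * p.length + r by ring,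
    concatTranslates_mul_add p hp _ hr.le, concatTranslates_mul_add p hp _ hr.le, zpow_one_add,
    Equiv.Perm.mul_apply]

lemma dist_concatTranslates_succ_le (hconn : G.Connected) (hg : IsAut G g) (hp : 0 < p.length)
    (n : ℤ) : G.dist (concatTranslates g p n) (concatTranslates g p (n + 1)) ≤ 1 := by
  obtain ⟨q, r, hr, rfl⟩ := exists_eq_mul_add_of_pos hp n
  rw [add_assoc, show (r : ℤ) + 1 = ↑(r + 1) by push_cast; ring,
    concatTranslates_mul_add p hp _ hr.le, concatTranslates_mul_add p hp _ hr,
    (hg.zpow q).dist_eq hconn, SimpleGraph.dist_eq_one_iff_adj.mpr (p.adj_getVert_succ hr)]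

end ConcatTranslates

lemma exists_axis_of_dist_pow_eq {G : SimpleGraph V} (hconn : G.Connected) {g : Equiv.Perm V}
    (hg : IsAut G g) {x : V} {ℓ : ℕ} (hℓ : 0 < ℓ)
    (hx : ∀ n : ℕ, G.dist x ((g ^ n) x) = n * ℓ) :
    ∃ γ : ℤ → V, IsBiGeodesic G γ ∧ (∀ n : ℤ, g (γ n) = γ (n + ℓ)) ∧ γ 0 = x := by
  obtain ⟨p, hp⟩ := hconn.exists_walk_length_eq_dist x (g x)
  obtain rfl : p.length = ℓ := by simpa [hp] using hx 1
  have hscale (j : ℤ) (d : ℕ) : G.dist (concatTranslates g p (j * p.length))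
      (concatTranslates g p ((j + d) * p.length)) = d * p.length := by
    rw [concatTranslates_mul p hℓ, concatTranslates_mul p hℓ, zpow_add, zpow_natCast,
      Equiv.Perm.mul_apply, (hg.zpow j).dist_eq hconn, hx]
  refine ⟨concatTranslates g p, ?_, apply_concatTranslates p hℓ, ?_⟩
  · exact isBiGeodesic_of_dist_succ_le hconn (dist_concatTranslates_succ_le p hconn hg hℓ) hℓ
      hscale
  · simpa using concatTranslates_mul p hℓ 0

/-- If an isometry `g` of a connected graph acts as a translation of
length `ℓ ≥ 1` on a bi-infinite geodesic, then `d(x, g·x) ≥ ℓ` for every vertex `x`;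
and any vertex with `d(x, g·x) = ℓ` satisfies `d(x, gⁿ·x) = n·ℓ` for all `n`, hence
lies on a bi-infinite geodesic on which `g` acts as a translation of length `ℓ`. -/
theorem axis_from_another
    {V : Type*} (G : SimpleGraph V) (hconn : G.Connected)
    (g : Equiv.Perm V) (hg : IsAut G g)
    (γ : ℤ → V) (hγ : IsBiGeodesic G γ) (ℓ : ℕ) (hℓ : 1 ≤ ℓ)
    (htr : ∀ n : ℤ, g (γ n) = γ (n + ℓ)) :
    (∀ x : V, ℓ ≤ G.dist x (g x)) ∧
    ∀ x : V, G.dist x (g x) = ℓ →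
      (∀ n : ℕ, G.dist x ((g ^ n) x) = n * ℓ) ∧
      ∃ γ' : ℤ → V, IsBiGeodesic G γ' ∧ (∀ n : ℤ, g (γ' n) = γ' (n + ℓ)) ∧
        ∃ i : ℤ, γ' i = x := by
  refine ⟨hγ.le_dist_of_translate hconn hg htr, fun x hx => ?_⟩
  have hpow (n : ℕ) : G.dist x ((g ^ n) x) = n * ℓ :=
    le_antisymm (hx ▸ hg.dist_pow_apply_le hconn x n)
      (hγ.le_dist_of_translate hconn (hg.pow n) (apply_pow_of_translate htr n) x)
  obtain ⟨γ', hγ', hγ'g, hγ'x⟩ := exists_axis_of_dist_pow_eq hconn hg hℓ hpow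
  exact ⟨hpow, γ', hγ', hγ'g, 0, hγ'x⟩

end QM
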